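/- Every weakly 2-typical real is Π⁰₁-immune: if Y belongs to every Σ⁰₁(∅') class of Lebesgue measure 1, then Y (viewed as a subset of ω) contains no infinite co-c.e. set. -/

import Mathlib

open Classical in
noncomputable def chi (A : Set ℕ) : ℕ →. ℕ := fun n => Part.some (if n ∈ A then 1 else 0)

/-- Functions partial recursive in an oracle `O`. -/
inductive RecursiveIn' (O : ℕ →. ℕ) : (ℕ →. ℕ) → Prop
  | zero : RecursiveIn' O (pure 0)
  | succ : RecursiveIn' O (fun n => Part.some (n + 1))
  | left : RecursiveIn' O (fun n => Part.some n.unpair.1)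
  | right : RecursiveIn' O (fun n => Part.some n.unpair.2)
  | oracle : RecursiveIn' O O
  | pair {f g} : RecursiveIn' O f → RecursiveIn' O g →
      RecursiveIn' O fun n => Nat.pair <$> f n <*> g n
  | comp {f g} : RecursiveIn' O f → RecursiveIn' O g →
      RecursiveIn' O fun n => g n >>= f
  | prec {f g} : RecursiveIn' O f → RecursiveIn' O g →
      RecursiveIn' O (Nat.unpaired fun a n =>
        n.rec (f a) fun y IH => do let i ← IH; g (Nat.pair a (Nat.pair y i)))
  | rfind {f} : RecursiveIn' O f →
      RecursiveIn' O fun a => Nat.rfind fun n => (fun m => m = 0) <$> f (Nat.pair a n)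

/-- `A` is Turing reducible to `B`. -/
def TuringRed (A B : Set ℕ) : Prop := RecursiveIn' (chi B) (chi A)

/-- A total function computable from the oracle `O`. -/
def ComputableIn' (O : ℕ →. ℕ) (f : ℕ → ℕ) : Prop := RecursiveIn' O fun n => Part.some (f n)

/-- `S` is computably enumerable in the oracle `O`. -/
def CeIn (O : ℕ →. ℕ) (S : Set ℕ) : Prop :=
  ∃ f : ℕ →. ℕ, RecursiveIn' O f ∧ ∀ n, n ∈ S ↔ (f n).Dom

/-- The `e`-th c.e. set. -/
def W (e : ℕ) : Set ℕ := {n | ((Denumerable.ofNat Nat.Partrec.Code e).eval n).Dom}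

/-- The halting problem `∅'`. -/
def K0 : Set ℕ := {n | ((Denumerable.ofNat Nat.Partrec.Code n.unpair.1).eval n.unpair.2).Dom}

/-- The basic clopen cylinder of a finite binary string in Cantor space. -/
def cyl (σ : List Bool) : Set (ℕ → Bool) :=
  {X | ∀ i : Fin σ.length, X i = σ.get i}

/-- `S` is a `Σ⁰₁(O)` class: the union of the cylinders of an `O`-c.e. set of strings. -/
def Sigma01ClassIn (O : ℕ →. ℕ) (S : Set (ℕ → Bool)) : Prop :=
  ∃ V : Set ℕ, CeIn O V ∧
    S = {X | ∃ σ : List Bool, Encodable.encode σ ∈ V ∧ X ∈ cyl σ}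

open MeasureTheory Finset
open scoped ENNReal

/-!
Let `C = (W e)ᶜ` be infinite. The class `{X | ∃ n ∈ C, X n = false}` is `Σ⁰₁(∅')`: `C` is c.e.
in `∅'` because `n ∈ W e ↔ ⟨e, n⟩ ∈ ∅'`, and the class is generated by the strings of length
`n + 1` ending in `false` with `n ∈ C`. Its complement `{X | C ⊆ X}` lies, for every `k`, in a
finite union of cylinders of total measure `2⁻ᵏ`, so it is null. Hence the weakly 2-typical `Y`
lies in the class, i.e. `C ⊄ Y`.
-/

theorem RecursiveIn'.of_natPartrec {O f : ℕ →. ℕ} (hf : Nat.Partrec f) : RecursiveIn' O f := by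
  induction hf with
  | zero => exact .zero
  | succ => exact .succ
  | left => exact .left
  | right => exact .right
  | pair _ _ ihf ihg => exact .pair ihf ihg
  | comp _ _ ihf ihg => exact .comp ihf ihg
  | prec _ _ ihf ihg => exact .prec ihf ihg
  | rfind _ ihf => exact .rfind ihf

theorem ceIn_chi_compl_preimage {A : Set ℕ} {g : ℕ → ℕ} (hg : Computable g) :
    CeIn (chi A) (g ⁻¹' A)ᶜ := by
  let query : ℕ →. ℕ := fun k => Part.some (g k.unpair.1) >>= chi A
  have hquery : RecursiveIn' (chi A) query :=
    .comp .oracle (.of_natPartrec (Partrec.nat_iff.1 (hg.comp (Computable.fst.comp .unpair))))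
  -- the search halts at once if the oracle answers `g a ∉ A`, and never otherwise
  refine ⟨_, .rfind hquery, fun a => ?_⟩
  have hquery_eq : ∀ n, query (Nat.pair a n) = chi A (g a) := fun n => by
    simp only [query, Nat.unpair_pair]
    exact Part.bind_some _ _
  constructor
  · intro (ha : g a ∉ A)
    exact ⟨0, by simp [hquery_eq, chi, ha], fun {_} h => (Nat.not_lt_zero _ h).elim⟩
  · rintro ⟨n, hn, -⟩ (ha : g a ∈ A)
    simp [hquery_eq, chi, ha] at hn

theorem W_eq_preimage_K0 (e : ℕ) : W e = Nat.pair e ⁻¹' K0 := by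
  ext m
  simp [W, K0]

theorem ceIn_chi_K0_compl_W (e : ℕ) : CeIn (chi K0) (W e)ᶜ :=
  W_eq_preimage_K0 e ▸ ceIn_chi_compl_preimage (Primrec₂.natPair.to_comp.comp (.const e) .id)

def lastFalsePos (σ : List Bool) : Option ℕ :=
  if σ[σ.length - 1]? = some false then some (σ.length - 1) else none

theorem lastFalsePos_eq_some_iff {σ : List Bool} {n : ℕ} :
    lastFalsePos σ = some n ↔ σ.length = n + 1 ∧ σ[n]? = some false := by
  unfold lastFalsePos
  split_ifs <;> grind

theorem primrec_lastFalsePos : Primrec lastFalsePos := by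
  have hlen : Primrec fun σ : List Bool => σ.length - 1 :=
    Primrec.nat_sub.comp Primrec.list_length (.const 1)
  exact Primrec.ite (Primrec.eq.comp (Primrec.list_getElem?.comp .id hlen) (.const _))
    (Primrec.option_some.comp hlen) (.const none)

theorem mem_cyl_ofFn (X : ℕ → Bool) (n : ℕ) : X ∈ cyl (List.ofFn fun i : Fin n => X i) :=
  fun i => by simp

theorem sigma01ClassIn_exists_mem_eq_false {O : ℕ →. ℕ} {C : Set ℕ} (hC : CeIn O C) :
    Sigma01ClassIn O {X | ∃ n ∈ C, X n = false} := by
  obtain ⟨f, hf, hCf⟩ := hC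
  let pos : ℕ → Option ℕ := fun a => (Encodable.decode a).bind lastFalsePos
  have hpos : Computable pos :=
    Computable.option_bind Computable.decode (primrec_lastFalsePos.to_comp.comp .snd).to₂
  -- `fun n => f n` rather than `f`: the `PFun` type of `f` blocks the `Part.bind` simp lemmas
  refine ⟨{a | ∃ n ∈ pos a, n ∈ C}, ⟨fun a => (pos a : Part ℕ).bind fun n => f n, ?_, ?_⟩, ?_⟩
  · exact .comp hf (.of_natPartrec (Partrec.nat_iff.1 hpos.ofOption))
  · intro a
    simp only [Set.mem_ofPred_eq, Option.mem_def, hCf]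
    cases pos a <;> simp
  · ext X
    simp only [Set.mem_ofPred_eq, pos, Encodable.encodek, Option.bind_some, Option.mem_def]
    constructor
    · rintro ⟨n, hnC, hXn⟩
      refine ⟨List.ofFn fun i : Fin (n + 1) => X i, ⟨n, ?_, hnC⟩, mem_cyl_ofFn X _⟩
      simp only [lastFalsePos_eq_some_iff, List.length_ofFn, List.getElem?_ofFn]
      simp [hXn]
    · rintro ⟨σ, ⟨n, hσn, hnC⟩, hXσ⟩
      obtain ⟨hlen, hσ⟩ := lastFalsePos_eq_some_iff.1 hσn
      refine ⟨n, hnC, ?_⟩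
      calc X n = σ[n] := hXσ ⟨n, by omega⟩
        _ = false := (List.getElem?_eq_some_iff.1 hσ).2

theorem card_filter_forall_mem_eq_true {ι : Type*} [Fintype ι] [DecidableEq ι] (F : Finset ι) :
    #{f : ι → Bool | ∀ i ∈ F, f i = true} = 2 ^ (Fintype.card ι - #F) := by
  have : ({f : ι → Bool | ∀ i ∈ F, f i = true} : Finset _) =
      Fintype.piFinset fun i => if i ∈ F then {true} else univ := by
    ext f; simp only [mem_filter, mem_univ, true_and, Fintype.mem_piFinset]
    refine forall_congr' fun i => ?_
    split_ifs <;> simp_all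
  rw [this, Fintype.card_piFinset]
  simp only [apply_ite card, card_singleton, card_univ, Fintype.card_bool]
  rw [prod_ite, prod_const_one, one_mul, prod_const, filter_not, card_sdiff]
  simp

section CoinFlipping

variable {μ : Measure (ℕ → Bool)}

theorem measure_forall_mem_eq_true_le
    (hμ : ∀ σ : List Bool, μ (cyl σ) = (1 / 2 : ℝ≥0∞) ^ σ.length) (F : Finset ℕ) :
    μ {X | ∀ n ∈ F, X n = true} ≤ (1 / 2 : ℝ≥0∞) ^ #F := by
  obtain ⟨N, hFN⟩ : ∃ N, ∀ n ∈ F, n < N :=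
    ⟨F.sup id + 1, fun n hn => Nat.lt_succ_of_le (le_sup (f := id) hn)⟩
  let T : Finset (Fin N → Bool) := {f | ∀ i ∈ F.attachFin hFN, f i = true}
  have hcover : {X : ℕ → Bool | ∀ n ∈ F, X n = true} ⊆ ⋃ f ∈ T, cyl (List.ofFn f) :=
    fun X hX => Set.mem_iUnion₂.2
      ⟨fun i => X i, by simpa [T] using fun (i : Fin N) hi => hX i hi, mem_cyl_ofFn X N⟩
  have hcard : #T = 2 ^ (N - #F) := by
    simpa [T] using card_filter_forall_mem_eq_true (F.attachFin hFN)
  have hFN_card : #F ≤ N := by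
    simpa using card_le_card (show F ⊆ range N from fun n hn => mem_range.2 (hFN n hn))
  calc μ {X | ∀ n ∈ F, X n = true}
      ≤ ∑ f ∈ T, μ (cyl (List.ofFn f)) :=
        (measure_mono hcover).trans (measure_biUnion_finset_le _ _)
    _ = 2 ^ (N - #F) * (1 / 2) ^ N := by simp [hμ, hcard]
    _ = (1 / 2) ^ #F := by
        obtain ⟨j, hj⟩ := Nat.exists_eq_add_of_le' hFN_card
        rw [hj, Nat.add_sub_cancel, pow_add, ← mul_assoc, ← mul_pow, one_div,
          ENNReal.mul_inv_cancel two_ne_zero ENNReal.ofNat_ne_top, one_pow, one_mul]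

theorem measure_forall_mem_eq_true_of_infinite
    (hμ : ∀ σ : List Bool, μ (cyl σ) = (1 / 2 : ℝ≥0∞) ^ σ.length) {A : Set ℕ} (hA : A.Infinite) :
    μ {X | ∀ n ∈ A, X n = true} = 0 := by
  refine le_antisymm (ge_of_tendsto' (ENNReal.tendsto_pow_atTop_nhds_zero_of_lt_one
    (by norm_num : (1 / 2 : ℝ≥0∞) < 1)) fun k => ?_) bot_le
  obtain ⟨F, hFA, rfl⟩ := hA.exists_subset_card_eq k
  refine le_trans (measure_mono fun X (hX : ∀ n ∈ A, X n = true) n hn => hX n (hFA hn)) ?_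
  exact measure_forall_mem_eq_true_le hμ F

theorem measure_exists_mem_eq_false_of_infinite
    (hμ : ∀ σ : List Bool, μ (cyl σ) = (1 / 2 : ℝ≥0∞) ^ σ.length) {A : Set ℕ} (hA : A.Infinite) :
    μ {X | ∃ n ∈ A, X n = false} = 1 := by
  have : IsProbabilityMeasure μ := ⟨by simpa [cyl] using hμ []⟩
  refine (measure_congr (ae_eq_univ.2 ?_)).trans measure_univ
  simpa [Set.compl_ofPred] using measure_forall_mem_eq_true_of_infinite hμ hA

end CoinFlipping

/-- Every weakly 2-typical real is `Π⁰₁`-immune: if `Y` belongs to every `Σ⁰₁(∅')` class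
of (fair-coin Lebesgue) measure one, then `{n | Y n = true}` contains no infinite
co-c.e. set.  The uniform measure `μ` on Cantor space is specified by its values on
cylinders. -/
theorem weakly_two_typical_pi01immune
    (μ : MeasureTheory.Measure (ℕ → Bool))
    (hμ : ∀ σ : List Bool, μ (cyl σ) = (1 / 2 : ENNReal) ^ σ.length)
    (Y : ℕ → Bool)
    (hY : ∀ S : Set (ℕ → Bool), Sigma01ClassIn (chi K0) S → μ S = 1 → Y ∈ S) :
    ∀ e : ℕ, ((W e)ᶜ).Infinite → ¬ (W e)ᶜ ⊆ {n | Y n = true} := by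
  intro e hinf hsub
  obtain ⟨n, hn, hYn⟩ := hY _ (sigma01ClassIn_exists_mem_eq_false (ceIn_chi_K0_compl_W e))
    (measure_exists_mem_eq_false_of_infinite hμ hinf)
  exact Bool.false_ne_true (hYn ▸ hsub hn)
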